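/- arXiv:2005.01300 — 2 statements merged into one kernel-verified Lean document; each statement's English description precedes it below -/
import Mathlib

section
/- Let K = Q(θ) where θ is a root of an irreducible polynomial x^n − a ∈ Z[x], n ≥ 2, a a nonzero integer. Let p be a prime dividing n with p ∤ a, write s = v_p(n) and n' = n/p^s, set θ' = θ^{n'} and K' = Q(θ'), so that K/K' is an extension of degree n'. Then p does not divide the absolute norm N_{K'/Q}(d_{K/K'}) of the relative discriminant ideal d_{K/K'} of K over K' (equivalently, p does not divide the absolute norm of the relative different ideal of O_K over O_{K'}). -/
/-!
Put `m = n / p ^ v_p(n)`. Since `θ ^ m ∈ K'`, the minimal polynomial `f` of `θ` over `𝓞 K'`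
divides `X ^ m - θ ^ m`, so `f'(θ)` divides `m θ ^ (m - 1)`. As `θ` generates `K` over `K'`,
`f'(θ)` lies in the different, hence so does `m θ ^ (m - 1)`, and the absolute norm of the
different divides `N_{K/ℚ}(m θ ^ (m - 1)) = m ^ [K:ℚ] N(θ) ^ (m - 1)`. Finally `p ∤ m` and
`p ∤ N(θ)`, the latter because `N(θ) ^ n = a ^ [K:ℚ]`.
-/

open Polynomial NumberField

theorem aeval_derivative_minpoly_dvd_of_pow_eq_algebraMap {A B : Type*} [CommRing A] [CommRing B]
    [IsDomain A] [IsIntegrallyClosed A] [IsDomain B] [Algebra A B] [Module.IsTorsionFree A B]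
    {x : B} (hx : IsIntegral A x) {m : ℕ} {y : A} (hxy : x ^ m = algebraMap A B y) :
    aeval x (derivative (minpoly A x)) ∣ (m : B) * x ^ (m - 1) := by
  obtain ⟨g, hg⟩ : minpoly A x ∣ X ^ m - C y :=
    minpoly.isIntegrallyClosed_dvd hx (by simp [hxy])
  refine ⟨aeval x g, ?_⟩
  simpa [derivative_mul, derivative_X_pow] using congrArg (fun q => aeval x (derivative q)) hg

theorem natCast_mul_pow_sub_one_mem_differentIdeal (A K L : Type*) {B : Type*} [CommRing A]
    [Field K] [CommRing B] [Field L] [Algebra A K] [Algebra B L] [Algebra A B] [Algebra K L]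
    [Algebra A L] [IsScalarTower A K L] [IsScalarTower A B L] [IsDomain A] [IsFractionRing A K]
    [FiniteDimensional K L] [Algebra.IsSeparable K L] [IsIntegralClosure B A L]
    [IsIntegrallyClosed A] [IsDedekindDomain B] [Module.IsTorsionFree A B] {x : B}
    (hx : Algebra.adjoin K {algebraMap B L x} = ⊤) {m : ℕ} {y : A}
    (hxy : x ^ m = algebraMap A B y) :
    (m : B) * x ^ (m - 1) ∈ differentIdeal A B := by
  obtain ⟨g, hg⟩ := aeval_derivative_minpoly_dvd_of_pow_eq_algebraMap
    (IsIntegralClosure.isIntegral A L x) hxy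
  rw [hg]
  exact Ideal.mul_mem_right _ _ (aeval_derivative_mem_differentIdeal A K L x hx)

theorem Algebra.adjoin_eq_top_of_adjoin_eq_top {F E R : Type*} [CommSemiring F]
    [CommSemiring E] [CommSemiring R] [Algebra F E] [Algebra F R] [Algebra E R]
    [IsScalarTower F E R] {s : Set R} (h : Algebra.adjoin F s = ⊤) : Algebra.adjoin E s = ⊤ :=
  Subalgebra.restrictScalars_injective F <| by
    rw [Subalgebra.restrictScalars_top]
    refine top_unique ?_
    rw [← h]
    exact Algebra.adjoin_le Algebra.subset_adjoin

namespace Algebra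

variable {R S : Type*} [CommRing R] [Ring S] [Algebra R S] [Module.Free R S] {p : R}

theorem not_dvd_norm_of_pow_eq_algebraMap (hp : Prime p) {x : S} {n : ℕ} {a : R} (hn : n ≠ 0)
    (hxa : x ^ n = algebraMap R S a) (hpa : ¬ p ∣ a) : ¬ p ∣ norm R x := fun h ↦ by
  refine hpa (hp.dvd_of_dvd_pow (n := Module.finrank R S) ?_)
  rw [← Algebra.norm_algebraMap, ← hxa, map_pow]
  exact dvd_pow h hn

theorem not_dvd_norm_natCast_mul_pow (hp : Prime p) {m : ℕ} (hpm : ¬ p ∣ (m : R)) {x : S}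
    (hx : ¬ p ∣ norm R x) (k : ℕ) : ¬ p ∣ norm R ((m : S) * x ^ k) := by
  rw [map_mul, map_pow, ← map_natCast (algebraMap R S), Algebra.norm_algebraMap]
  rintro h
  rcases hp.dvd_or_dvd h with h | h
  · exact hpm (hp.dvd_of_dvd_pow h)
  · exact hx (hp.dvd_of_dvd_pow h)

end Algebra

theorem Nat.not_dvd_div_pow_padicValNat {n p : ℕ} (hp : p.Prime) (hn : n ≠ 0) :
    ¬ p ∣ n / p ^ padicValNat p n := by
  simpa only [Nat.factorization_def n hp] using Nat.not_dvd_ordCompl hp hn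

theorem prime_not_dvd_absNorm_relative_different_general
    (K : Type*) [Field K] [NumberField K]
    (n : ℕ) (a : ℤ) (hn : 2 ≤ n)
    (θ : K) (hθ : θ ^ n = (a : K))
    (hgen : Algebra.adjoin ℚ {θ} = ⊤)
    (p : ℕ) (hp : p.Prime) (hpa : ¬ (p : ℤ) ∣ a)
    (K' : IntermediateField ℚ K)
    (hK' : K' = IntermediateField.adjoin ℚ {θ ^ (n / p ^ padicValNat p n)}) :
    ¬ p ∣ Ideal.absNorm (differentIdeal (𝓞 ↥K') (𝓞 K)) := by
  have hn0 : n ≠ 0 := by omega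
  set m := n / p ^ padicValNat p n
  have hθint : IsIntegral ℤ θ := ⟨X ^ n - C a, monic_X_pow_sub_C a hn0, by
    rw [eval₂_sub, eval₂_pow, eval₂_X, eval₂_C, hθ]; simp⟩
  let x : 𝓞 K := ⟨θ, hθint⟩
  have hxa : x ^ n = algebraMap ℤ (𝓞 K) a := RingOfIntegers.ext <| by
    push_cast
    exact hθ.trans (by simp)
  have hmK' : θ ^ m ∈ K' := hK' ▸ IntermediateField.mem_adjoin_simple_self ℚ _
  let y : 𝓞 K' := ⟨⟨θ ^ m, hmK'⟩, (isIntegral_algebraMap_iff (algebraMap K' K).injective).mp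
    (hθint.pow m)⟩
  have hxy : x ^ m = algebraMap (𝓞 K') (𝓞 K) y := RingOfIntegers.ext <| by
    push_cast
    rfl
  have hgen' : Algebra.adjoin K' {algebraMap (𝓞 K) K x} = ⊤ :=
    Algebra.adjoin_eq_top_of_adjoin_eq_top hgen
  have hmem : ((m : 𝓞 K) * x ^ (m - 1)) ∈ differentIdeal (𝓞 K') (𝓞 K) :=
    natCast_mul_pow_sub_one_mem_differentIdeal (𝓞 K') K' K hgen' hxy
  have hpZ : Prime (p : ℤ) := Nat.prime_iff_prime_int.mp hp
  intro hdvd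
  refine Algebra.not_dvd_norm_natCast_mul_pow hpZ (m := m) ?_
    (Algebra.not_dvd_norm_of_pow_eq_algebraMap hpZ hn0 hxa hpa) (m - 1) ?_
  · exact_mod_cast Nat.not_dvd_div_pow_padicValNat hp hn0
  · exact (Int.natCast_dvd_natCast.mpr hdvd).trans (Ideal.absNorm_dvd_norm_of_mem hmem)

/-- Let `K = ℚ(θ)` with `θ` a root of an irreducible polynomial `x^n - a ∈ ℤ[x]`, `n ≥ 2`.
Let `p` be a prime dividing `n` with `p ∤ a`, write `s = v_p(n)` and `n' = n/p^s`, and set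
`θ' = θ^{n'}`, `K' = ℚ(θ')`, so that `K/K'` is an extension of degree `n'`.  Then `p` does
not divide the absolute norm of the relative discriminant of `K/K'`; equivalently, `p` does
not divide the absolute norm of the relative different ideal of `O_K` over `O_{K'}`. -/
theorem prime_not_dvd_absNorm_relative_different
    (K : Type*) [Field K] [NumberField K]
    (n : ℕ) (a : ℤ) (hn : 2 ≤ n) (ha : a ≠ 0)
    (hirr : Irreducible (X ^ n - C a : ℤ[X]))
    (θ : K) (hθ : θ ^ n = (a : K))
    (hgen : Algebra.adjoin ℚ {θ} = ⊤)
    (p : ℕ) (hp : p.Prime) (hpn : p ∣ n) (hpa : ¬ (p : ℤ) ∣ a)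
    (K' : IntermediateField ℚ K)
    (hK' : K' = IntermediateField.adjoin ℚ {θ ^ (n / p ^ padicValNat p n)}) :
    ¬ p ∣ Ideal.absNorm (differentIdeal (𝓞 ↥K') (𝓞 K)) :=
  prime_not_dvd_absNorm_relative_different_general K n a hn θ hθ hgen p hp hpa K' hK'
end

section
/- Let K = Q(θ) where θ is a root of an irreducible polynomial x^n − a ∈ Z[x], n ≥ 2, a a nonzero integer. If O_K = Z[θ], then a is squarefree. -/
/-!
If `p ^ 2 ∣ a` with `p` irreducible and `n = m + 2`, then `(θ ^ (m + 1)) ^ n = a ^ (m + 1)` is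
divisible by `p ^ (2m + 2)`, hence by `p ^ n`, so `p ∣ θ ^ (m + 1)` in the integrally closed ring
`𝓞 K`. But `X ^ n - a` is irreducible, hence the minimal polynomial of `θ`, so
`1, θ, …, θ ^ (n - 1)` is a `ℤ`-basis of `𝓞 K = ℤ[θ]`, and a basis vector is not divisible by a
non-unit scalar.
-/

open Polynomial NumberField

theorem Module.Basis.isUnit_of_smul_eq {ι R M : Type*} [CommSemiring R] [AddCommMonoid M]
    [Module R M] (b : Basis ι R M) {i : ι} {r : R} {x : M} (h : r • x = b i) : IsUnit r :=
  IsUnit.of_mul_eq_one (b.repr x i) (by simpa using congrArg (b.repr · i) h)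

theorem IsIntegrallyClosed.minpoly_eq_of_irreducible_of_monic {R S : Type*} [CommRing R]
    [IsDomain R] [IsIntegrallyClosed R] [CommRing S] [IsDomain S] [Algebra R S]
    [Module.IsTorsionFree R S] {s : S} {f : R[X]} (hirr : Irreducible f) (hmonic : f.Monic)
    (hf : aeval s f = 0) : minpoly R s = f := by
  have hs : IsIntegral R s := ⟨f, hmonic, hf⟩
  exact eq_of_monic_of_associated (minpoly.monic hs) hmonic
    ((minpoly.prime_of_isIntegrallyClosed hs).irreducible.associated_of_dvd hirr
      (minpoly.isIntegrallyClosed_dvd hs hf))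

theorem IsIntegrallyClosed.dvd_pow_succ_of_pow_eq_sq_mul {A : Type*} [CommRing A] [IsDomain A]
    [IsIntegrallyClosed A] {θ p b : A} {m : ℕ} (h : θ ^ (m + 2) = p ^ 2 * b) :
    p ∣ θ ^ (m + 1) := by
  rw [← IsIntegrallyClosed.pow_dvd_pow_iff (n := m + 2) (by omega), ← pow_mul, mul_comm,
    pow_mul, h, mul_pow, ← pow_mul]
  exact dvd_mul_of_dvd_left (pow_dvd_pow p (by omega)) _

theorem squarefree_of_ringOfIntegers_eq_adjoin_general
    (K : Type*) [Field K] [NumberField K]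
    (n : ℕ) (a : ℤ) (hn : 2 ≤ n)
    (hirr : Irreducible (X ^ n - C a : ℤ[X]))
    (θ : 𝓞 K) (hθ : θ ^ n = (a : 𝓞 K))
    (hmono : Algebra.adjoin ℤ {θ} = ⊤) :
    Squarefree a := by
  obtain ⟨m, rfl⟩ := Nat.exists_eq_add_of_le' hn
  rw [squarefree_iff_irreducible_sq_not_dvd_of_exists_irreducible ⟨2, Int.prime_two.irreducible⟩]
  rintro p hp ⟨b, rfl⟩
  have hθint : IsIntegral ℤ θ := RingOfIntegers.isIntegral θ
  have hmin : minpoly ℤ θ = X ^ (m + 2) - C (p * p * b) :=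
    IsIntegrallyClosed.minpoly_eq_of_irreducible_of_monic hirr (monic_X_pow_sub_C _ (by omega))
      (by simp [hθ])
  let pb := PowerBasis.ofAdjoinEqTop' hθint hmono
  have hdim : pb.dim = m + 2 := by
    rw [PowerBasis.ofAdjoinEqTop'_dim, hmin, natDegree_X_pow_sub_C]
  obtain ⟨ξ, hξ⟩ : (p : 𝓞 K) ∣ θ ^ (m + 1) :=
    IsIntegrallyClosed.dvd_pow_succ_of_pow_eq_sq_mul (b := (b : 𝓞 K)) (by rw [hθ]; push_cast; ring)
  have hbasis : p • ξ = pb.basis ⟨m + 1, by omega⟩ := by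
    simp only [pb, PowerBasis.coe_basis, PowerBasis.ofAdjoinEqTop'_gen, zsmul_eq_mul, hξ]
  exact hp.not_isUnit (pb.basis.isUnit_of_smul_eq hbasis)

/-- Let `K = ℚ(θ)` with `θ` a root of an irreducible polynomial `x^n - a ∈ ℤ[x]`, `n ≥ 2`.
If `O_K = ℤ[θ]`, then `a` is squarefree. -/
theorem squarefree_of_ringOfIntegers_eq_adjoin
    (K : Type*) [Field K] [NumberField K]
    (n : ℕ) (a : ℤ) (hn : 2 ≤ n) (ha : a ≠ 0)
    (hirr : Irreducible (X ^ n - C a : ℤ[X]))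
    (θ : 𝓞 K) (hθ : θ ^ n = (a : 𝓞 K))
    (hgen : Algebra.adjoin ℚ {(θ : K)} = ⊤)
    (hmono : Algebra.adjoin ℤ {θ} = ⊤) :
    Squarefree a :=
  squarefree_of_ringOfIntegers_eq_adjoin_general K n a hn hirr θ hθ hmono
end
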